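/- For any k ≥ 1 and any sequence x : ℕ → Fin k, the set of cluster points of the sequence (r^x(n))_{n≥1} in the simplex Δ^k (with the Euclidean topology) is a connected set. -/

import Mathlib

open Filter

noncomputable def relFreq {k : ℕ} (x : ℕ → Fin k) (n : ℕ) :
    EuclideanSpace ℝ (Fin k) :=
  WithLp.toLp 2 fun i => (((Finset.Icc 1 n).filter (fun j => x j = i)).card : ℝ) / n

open Metric Set Topology

section Aux

variable {k : ℕ} (x : ℕ → Fin k)

lemma relFreq_count_le (n : ℕ) (i : Fin k) :
    ((Finset.Icc 1 n).filter (fun j => x j = i)).card ≤ n := by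
  calc ((Finset.Icc 1 n).filter (fun j => x j = i)).card
      ≤ (Finset.Icc 1 n).card := Finset.card_filter_le _ _
    _ = n := by rw [Nat.card_Icc]; omega

lemma relFreq_coord_nonneg (n : ℕ) (i : Fin k) : 0 ≤ relFreq x n i := by
  simp only [relFreq, PiLp.toLp_apply]
  positivity

lemma relFreq_coord_le_one (n : ℕ) (i : Fin k) : relFreq x n i ≤ 1 := by
  rcases Nat.eq_zero_or_pos n with rfl | hn
  · simp [relFreq]
  · simp only [relFreq, PiLp.toLp_apply]
    rw [div_le_one (by exact_mod_cast hn)]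
    exact_mod_cast relFreq_count_le x n i

lemma relFreq_norm_le (hk : 1 ≤ k) (n : ℕ) : ‖relFreq x n‖ ≤ (k : ℝ) := by
  rw [EuclideanSpace.norm_eq]
  have h1 : ∑ i, ‖relFreq x n i‖ ^ 2 ≤ (k : ℝ) := by
    calc ∑ i, ‖relFreq x n i‖ ^ 2 ≤ ∑ _i : Fin k, (1 : ℝ) := by
          refine Finset.sum_le_sum fun i _ => ?_
          have h0 := relFreq_coord_nonneg x n i
          have h1 := relFreq_coord_le_one x n i
          rw [Real.norm_eq_abs, abs_of_nonneg h0]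
          nlinarith
      _ = (k : ℝ) := by simp
  calc Real.sqrt (∑ i, ‖relFreq x n i‖ ^ 2) ≤ Real.sqrt ((k : ℝ) ^ 2) := by
        apply Real.sqrt_le_sqrt
        have : (k : ℝ) ≤ (k : ℝ) ^ 2 := by
          have : (1 : ℝ) ≤ (k : ℝ) := by exact_mod_cast hk
          nlinarith
        linarith
    _ = (k : ℝ) := Real.sqrt_sq (by positivity)

lemma relFreq_coord_step (n : ℕ) (i : Fin k) :
    |relFreq x (n + 1) i - relFreq x n i| ≤ 2 / (n + 1 : ℝ) := by
  set a : ℕ := ((Finset.Icc 1 n).filter (fun j => x j = i)).card with ha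
  set e : ℕ := if x (n + 1) = i then 1 else 0 with he
  have hsplit : ((Finset.Icc 1 (n + 1)).filter (fun j => x j = i)).card = a + e := by
    have hins : Finset.Icc 1 (n + 1) = insert (n + 1) (Finset.Icc 1 n) := by
      ext j; simp only [Finset.mem_Icc, Finset.mem_insert]; omega
    rw [hins, Finset.filter_insert]
    have hnm : n + 1 ∉ (Finset.Icc 1 n).filter (fun j => x j = i) := by
      simp only [Finset.mem_filter, Finset.mem_Icc]
      omega
    split_ifs with h <;>
      simp [Finset.card_insert_of_notMem hnm, he, h, ha]
  have hrw : relFreq x (n + 1) i = ((a : ℝ) + e) / (n + 1) := by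
    simp only [relFreq, PiLp.toLp_apply, hsplit]
    push_cast
    ring
  have hrn : relFreq x n i = (a : ℝ) / n := by simp [relFreq, ha]
  have he1 : (e : ℝ) ≤ 1 := by
    rw [he]; split_ifs <;> norm_num
  have he0 : (0 : ℝ) ≤ e := by positivity
  have han : (a : ℝ) ≤ n := by exact_mod_cast relFreq_count_le x n i
  have ha0 : (0 : ℝ) ≤ a := by positivity
  rcases Nat.eq_zero_or_pos n with rfl | hn
  · have ha' : a = 0 := by
      rw [ha]
      simp
    have he2 : (e : ℝ) ≤ 2 := by linarith
    rw [hrw, hrn, ha']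
    norm_num
    exact_mod_cast he2
  · have hn' : (0 : ℝ) < n := by exact_mod_cast hn
    have hn1 : (0 : ℝ) < (n : ℝ) + 1 := by linarith
    have hdiff : relFreq x (n + 1) i - relFreq x n i
        = ((e : ℝ) * n - a) / (n * (n + 1)) := by
      rw [hrw, hrn]
      field_simp
      ring
    rw [hdiff, abs_div, abs_of_pos (mul_pos hn' hn1)]
    have hnum : |(e : ℝ) * n - a| ≤ n := by
      rw [abs_le]
      constructor <;> nlinarith
    rw [div_le_div_iff₀ (by positivity) (by positivity)]
    nlinarith [hnum, hn']

lemma relFreq_dist_step (hk : 1 ≤ k) (n : ℕ) :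
    dist (relFreq x (n + 1)) (relFreq x n) ≤ (k : ℝ) * (2 / (n + 1 : ℝ)) := by
  have hn1 : (0 : ℝ) < (n : ℝ) + 1 := by positivity
  have hk1 : (1 : ℝ) ≤ (k : ℝ) := by exact_mod_cast hk
  rw [EuclideanSpace.dist_eq]
  have h1 : ∑ i, dist (relFreq x (n + 1) i) (relFreq x n i) ^ 2
      ≤ (k : ℝ) * (2 / (n + 1 : ℝ)) ^ 2 := by
    calc ∑ i, dist (relFreq x (n + 1) i) (relFreq x n i) ^ 2
        ≤ ∑ _i : Fin k, (2 / (n + 1 : ℝ)) ^ 2 := by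
          refine Finset.sum_le_sum fun i _ => ?_
          have := relFreq_coord_step x n i
          rw [Real.dist_eq]
          exact pow_le_pow_left₀ (abs_nonneg _) this 2
      _ = (k : ℝ) * (2 / (n + 1 : ℝ)) ^ 2 := by simp [mul_comm]
  calc Real.sqrt (∑ i, dist (relFreq x (n + 1) i) (relFreq x n i) ^ 2)
      ≤ Real.sqrt (((k : ℝ) * (2 / (n + 1 : ℝ))) ^ 2) := by
        apply Real.sqrt_le_sqrt
        have h2 : (0 : ℝ) ≤ 2 / ((n : ℝ) + 1) := by positivity
        nlinarith
    _ = (k : ℝ) * (2 / (n + 1 : ℝ)) := Real.sqrt_sq (by positivity)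

lemma relFreq_tendsto_step (hk : 1 ≤ k) :
    Tendsto (fun n => dist (relFreq x (n + 1)) (relFreq x n)) atTop (𝓝 0) := by
  apply squeeze_zero (fun n => dist_nonneg) (relFreq_dist_step x hk)
  have h := tendsto_one_div_add_atTop_nhds_zero_nat.const_mul ((k : ℝ) * 2)
  rw [mul_zero] at h
  convert h using 2 with n
  ring

end Aux

theorem stmt2 (k : ℕ) (hk : 1 ≤ k) (x : ℕ → Fin k) :
    IsConnected {p : EuclideanSpace ℝ (Fin k) |
      MapClusterPt p atTop (relFreq x)} := by
  set f := relFreq x with hf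
  set S := {p : EuclideanSpace ℝ (Fin k) | MapClusterPt p atTop f} with hS
  set K := Metric.closedBall (0 : EuclideanSpace ℝ (Fin k)) k with hK
  have hball : ∀ n, f n ∈ K := fun n => by
    rw [hK, mem_closedBall_zero_iff]
    exact relFreq_norm_le x hk n
  have hKcomp : IsCompact K := isCompact_closedBall _ _
  have hle : Filter.map f atTop ≤ Filter.principal K :=
    le_principal_iff.mpr (mem_map.mpr (Eventually.of_forall hball))
  have hSK : S ⊆ K := by
    intro p hp
    have h1 : ClusterPt p (Filter.principal K) := ClusterPt.mono hp hle
    have h2 : p ∈ closure K := mem_closure_iff_clusterPt.mpr h1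
    rwa [isClosed_closedBall.closure_eq] at h2
  have hSclosed : IsClosed S := isClosed_setOf_clusterPt
  constructor
  · obtain ⟨p, _, hp⟩ := hKcomp.exists_mapClusterPt hle
    exact ⟨p, hp⟩
  · intro U V hU hV hUV hSU hSV
    by_contra hcon
    rw [Set.not_nonempty_iff_eq_empty] at hcon
    obtain ⟨a, haS, haU⟩ := hSU
    obtain ⟨b, hbS, hbV⟩ := hSV
    set A := S ∩ Vᶜ with hA
    set B := S ∩ Uᶜ with hB
    have hmemA : ∀ p ∈ S, p ∉ V → p ∈ A := fun p hp hv => ⟨hp, hv⟩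
    have hdisj : ∀ p ∈ S, p ∈ U → p ∈ V → False := by
      intro p hp hpu hpv
      have : p ∈ S ∩ (U ∩ V) := ⟨hp, hpu, hpv⟩
      rw [hcon] at this
      exact this
    have hSAB : S ⊆ A ∪ B := by
      intro p hp
      rcases hUV hp with hpu | hpv
      · exact Or.inl ⟨hp, fun hpv => hdisj p hp hpu hpv⟩
      · exact Or.inr ⟨hp, fun hpu => hdisj p hp hpu hpv⟩
    have haA : a ∈ A := ⟨haS, fun hv => hdisj a haS haU hv⟩
    have hbB : b ∈ B := ⟨hbS, fun hu => hdisj b hbS hu hbV⟩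
    have hAne : A.Nonempty := ⟨a, haA⟩
    have hBne : B.Nonempty := ⟨b, hbB⟩
    have hAclosed : IsClosed A := hSclosed.inter hV.isClosed_compl
    have hBclosed : IsClosed B := hSclosed.inter hU.isClosed_compl
    have hAcomp : IsCompact A :=
      hKcomp.of_isClosed_subset hAclosed ((Set.inter_subset_left).trans hSK)
    -- minimal distance between A and B
    obtain ⟨a₀, ha₀A, ha₀min⟩ :=
      hAcomp.exists_isMinOn hAne (Metric.continuous_infDist_pt B).continuousOn
    set ε := Metric.infDist a₀ B with hε'
    have ha₀B : a₀ ∉ B := by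
      intro hb
      rcases hUV ha₀A.1 with h | h
      · exact hb.2 h
      · exact ha₀A.2 h
    have hε : 0 < ε := (hBclosed.notMem_iff_infDist_pos hBne).1 ha₀B
    have hkey : ∀ p ∈ A, ∀ q ∈ B, ε ≤ dist p q := by
      intro p hp q hq
      calc ε ≤ Metric.infDist p B := ha₀min hp
        _ ≤ dist p q := Metric.infDist_le_dist_of_mem hq
    set c := ε / 3 with hc
    have hc0 : 0 < c := by positivity
    set φ := fun n => Metric.infDist (f n) A with hφ
    -- frequently low
    have freq_low : ∃ᶠ n in atTop, φ n < c := by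
      have := (mapClusterPt_iff_frequently.mp haS) (Metric.ball a c) (Metric.ball_mem_nhds a hc0)
      refine this.mono fun n hn => ?_
      calc φ n ≤ dist (f n) a := Metric.infDist_le_dist_of_mem haA
        _ < c := by rwa [Metric.mem_ball] at hn
    -- frequently high
    have freq_high : ∃ᶠ n in atTop, 2 * c ≤ φ n := by
      have := (mapClusterPt_iff_frequently.mp hbS) (Metric.ball b c) (Metric.ball_mem_nhds b hc0)
      refine this.mono fun n hn => ?_
      rw [Metric.mem_ball] at hn
      by_contra hlt
      push_neg at hlt
      obtain ⟨p, hpA, hpd⟩ := (Metric.infDist_lt_iff hAne).mp hlt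
      have h1 : ε ≤ dist p b := hkey p hpA b hbB
      have h2 : dist p b ≤ dist p (f n) + dist (f n) b := dist_triangle _ _ _
      rw [dist_comm p (f n)] at h2
      have : ε < 2 * c + c := by linarith
      rw [hc] at this
      linarith
    -- eventually small steps
    have hsteps : ∀ᶠ n in atTop, |φ (n + 1) - φ n| < c := by
      have := relFreq_tendsto_step x hk
      have h2 := (this.eventually (eventually_lt_nhds hc0))
      refine h2.mono fun n hn => ?_
      have hn' : dist (f (n + 1)) (f n) < c := hn
      have hub : φ (n + 1) ≤ φ n + dist (f (n + 1)) (f n) :=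
        Metric.infDist_le_infDist_add_dist
      have hlb : φ n ≤ φ (n + 1) + dist (f n) (f (n + 1)) :=
        Metric.infDist_le_infDist_add_dist
      rw [dist_comm (f n) (f (n + 1))] at hlb
      rw [abs_lt]
      constructor <;> linarith
    -- crossing: frequently in the middle band
    have freq_mid : ∃ᶠ n in atTop, c ≤ φ n ∧ φ n ≤ 2 * c := by
      rw [frequently_atTop]
      intro N
      obtain ⟨N₀, hN₀⟩ := eventually_atTop.mp hsteps
      obtain ⟨n₀, hn₀ge, hn₀⟩ := (frequently_atTop.mp freq_low) (max N N₀)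
      obtain ⟨m, hmge, hm⟩ := (frequently_atTop.mp freq_high) n₀
      have hex : ∃ j, n₀ ≤ j ∧ c ≤ φ j := ⟨m, hmge, by linarith⟩
      obtain ⟨hjge, hjc⟩ := Nat.find_spec hex
      have hjgt : n₀ < Nat.find hex := by
        rcases lt_or_eq_of_le hjge with h | h
        · exact h
        · rw [← h] at hjc; linarith
      have hjm1 : ¬(n₀ ≤ Nat.find hex - 1 ∧ c ≤ φ (Nat.find hex - 1)) :=
        Nat.find_min hex (by omega)
      have hjm1ge : n₀ ≤ Nat.find hex - 1 := by omega
      have hφjm1 : φ (Nat.find hex - 1) < c := by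
        by_contra h
        push_neg at h
        exact hjm1 ⟨hjm1ge, h⟩
      have hstep : |φ (Nat.find hex - 1 + 1) - φ (Nat.find hex - 1)| < c := by
        apply hN₀
        omega
      have hj1 : Nat.find hex - 1 + 1 = Nat.find hex := by omega
      rw [hj1] at hstep
      rw [abs_lt] at hstep
      refine ⟨Nat.find hex, by omega, hjc, by linarith⟩
    -- compact middle band
    set M := {y : EuclideanSpace ℝ (Fin k) |
      Metric.infDist y A ∈ Set.Icc c (2 * c)} ∩ K with hM
    have hMclosed : IsClosed M :=
      (isClosed_Icc.preimage (Metric.continuous_infDist_pt A)).inter Metric.isClosed_closedBall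
    have hMcomp : IsCompact M :=
      hKcomp.of_isClosed_subset hMclosed Set.inter_subset_right
    have freq_M : ∃ᶠ n in atTop, f n ∈ M := by
      refine freq_mid.mono fun n hn => ⟨⟨hn.1, hn.2⟩, hball n⟩
    have hneBot : (atTop ⊓ Filter.principal {n | f n ∈ M}).NeBot :=
      frequently_iff_neBot.mp freq_M
    have hle2 : Filter.map f (atTop ⊓ Filter.principal {n | f n ∈ M})
        ≤ Filter.principal M := by
      calc Filter.map f (atTop ⊓ Filter.principal {n | f n ∈ M})
          ≤ Filter.map f (Filter.principal {n | f n ∈ M}) := map_mono inf_le_right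
        _ = Filter.principal (f '' {n | f n ∈ M}) := map_principal
        _ ≤ Filter.principal M := by
            rw [le_principal_iff, mem_principal]
            rintro y ⟨n, hn, rfl⟩
            exact hn
    obtain ⟨z, hzM, hz⟩ := hMcomp.exists_clusterPt hle2
    have hzS : z ∈ S := hz.mono (map_mono inf_le_left)
    have hzc : c ≤ Metric.infDist z A := hzM.1.1
    have hz2c : Metric.infDist z A ≤ 2 * c := hzM.1.2
    rcases hSAB hzS with hzA | hzB
    · have : Metric.infDist z A = 0 := Metric.infDist_zero_of_mem hzA
      linarith
    · have : ε ≤ Metric.infDist z A := by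
        by_contra h
        push_neg at h
        obtain ⟨p, hpA, hpd⟩ := (Metric.infDist_lt_iff hAne).mp h
        have := hkey p hpA z hzB
        rw [dist_comm] at hpd
        linarith
      rw [hc] at hz2c
      linarith
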